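/- Let N ≥ 1 and ρ⋆ > 0. On a probability space, let (S_t)_{t ≥ 0} be independent, identically distributed random real N×N matrices with ‖S_t‖₂ ≤ ρ⋆ almost surely, and let ψ ∈ ℂ satisfy |ψ| ρ⋆ < 1. Define Φ_{0:τ−1} = S_{τ−1} S_{τ−2} ⋯ S_0 for τ ≥ 1 and Φ_{0:−1} = I. Then the series W_Φ = Σ_{τ=0}^{∞} |ψ|^{2τ} E[ Φ_{0:τ−1}ᵀ Φ_{0:τ−1} ] converges in the space of real N×N matrices, and W_Φ satisfies the stochastic Lyapunov equation W_Φ = |ψ|² E[ S_0ᵀ W_Φ S_0 ] + I. -/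

import Mathlib

open MeasureTheory ProbabilityTheory Matrix
open scoped BigOperators

/-- The spectral norm (Euclidean operator norm) of a real `N × N` matrix. -/
noncomputable def specNormR {N : ℕ} (A : Matrix (Fin N) (Fin N) ℝ) : ℝ :=
  ‖Matrix.toEuclideanCLM (𝕜 := ℝ) (n := Fin N) A‖

instance matrixMeasurableSpace {m n α : Type*} [MeasurableSpace α] :
    MeasurableSpace (Matrix m n α) :=
  inferInstanceAs (MeasurableSpace (m → n → α))

section aux
variable {N : ℕ}

lemma specNormR_nonneg (A : Matrix (Fin N) (Fin N) ℝ) : 0 ≤ specNormR A := norm_nonneg _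

lemma specNormR_mul_le (A B : Matrix (Fin N) (Fin N) ℝ) :
    specNormR (A * B) ≤ specNormR A * specNormR B := by
  unfold specNormR; rw [_root_.map_mul]; exact norm_mul_le _ _

lemma specNormR_one_le : specNormR (1 : Matrix (Fin N) (Fin N) ℝ) ≤ 1 := by
  unfold specNormR; rw [_root_.map_one, ContinuousLinearMap.one_def]
  exact ContinuousLinearMap.norm_id_le

lemma abs_entry_le_specNormR (A : Matrix (Fin N) (Fin N) ℝ) (i j : Fin N) :
    |A i j| ≤ specNormR A := by
  classical
  have h1 : Matrix.toEuclideanCLM (𝕜 := ℝ) (n := Fin N) A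
      ((WithLp.equiv 2 _).symm (Pi.single j 1)) =
      (WithLp.equiv 2 _).symm (A *ᵥ Pi.single j 1) :=
    Matrix.toEuclideanCLM_toLp (𝕜 := ℝ) A (Pi.single j 1)
  obtain ⟨y, hy⟩ : ∃ y : EuclideanSpace ℝ (Fin N), y = Matrix.toEuclideanCLM (𝕜 := ℝ)
      (n := Fin N) A ((WithLp.equiv 2 _).symm (Pi.single j 1)) := ⟨_, rfl⟩
  have hyi : y i = A i j := by
    rw [hy, h1]
    show (A *ᵥ Pi.single j 1) i = A i j
    simp [Matrix.mulVec_single]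
  have hcoord : |y i| ≤ ‖y‖ := by
    rw [EuclideanSpace.norm_eq]
    have h2 : |y i| = Real.sqrt (‖y i‖ ^ 2) := by
      rw [Real.sqrt_sq_eq_abs, Real.norm_eq_abs, abs_abs]
    rw [h2]
    apply Real.sqrt_le_sqrt
    exact Finset.single_le_sum (f := fun k => ‖y k‖ ^ 2)
      (fun k _ => by positivity) (Finset.mem_univ i)
  have hsingle : ‖(WithLp.equiv 2 (Fin N → ℝ)).symm (Pi.single j 1)‖ = 1 := by
    simpa using EuclideanSpace.norm_single (𝕜 := ℝ) j (1 : ℝ)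
  calc |A i j| = |y i| := by rw [hyi]
    _ ≤ ‖y‖ := hcoord
    _ ≤ ‖Matrix.toEuclideanCLM (𝕜 := ℝ) (n := Fin N) A‖ *
        ‖(WithLp.equiv 2 (Fin N → ℝ)).symm (Pi.single j 1)‖ := by
        rw [hy]; exact ContinuousLinearMap.le_opNorm _ _
    _ = specNormR A := by rw [hsingle, mul_one]; rfl

lemma measurable_entry {Ω : Type*} [MeasurableSpace Ω]
    {f : Ω → Matrix (Fin N) (Fin N) ℝ} (hf : Measurable f) (i j : Fin N) :
    Measurable fun ω => f ω i j :=
  (measurable_pi_apply j).comp ((measurable_pi_apply i).comp hf)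

lemma measurable_matrix_of {Ω : Type*} [MeasurableSpace Ω]
    {f : Ω → Matrix (Fin N) (Fin N) ℝ}
    (hf : ∀ i j, Measurable fun ω => f ω i j) : Measurable f :=
  measurable_pi_lambda _ fun i => measurable_pi_lambda _ fun j => hf i j

lemma measurable_matmul {Ω : Type*} [MeasurableSpace Ω]
    {f g : Ω → Matrix (Fin N) (Fin N) ℝ} (hf : Measurable f) (hg : Measurable g) :
    Measurable (fun ω => f ω * g ω) := by
  apply measurable_matrix_of
  intro i j
  simp only [Matrix.mul_apply]
  exact Finset.measurable_sum _ fun k _ => (measurable_entry hf i k).mul (measurable_entry hg k j)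

end aux

/-- `prodDesc S a ω k = S_{a+k−1} ⋯ S_{a+1} S_a` (evaluated at `ω`); in
particular `prodDesc S 0 ω τ = Φ_{0:τ−1} = S_{τ−1} ⋯ S_0`, with the empty
product (`τ = 0`) equal to the identity. -/
def prodDesc {N : ℕ} {Ω : Type*} (S : ℕ → Ω → Matrix (Fin N) (Fin N) ℝ)
    (a : ℕ) (ω : Ω) : ℕ → Matrix (Fin N) (Fin N) ℝ
  | 0 => 1
  | k + 1 => S (a + k) ω * prodDesc S a ω k

/-- Entrywise expectation of a random real matrix. -/
noncomputable def EM {Ω : Type*} [MeasurableSpace Ω] (μ : Measure Ω) {N : ℕ}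
    (X : Ω → Matrix (Fin N) (Fin N) ℝ) : Matrix (Fin N) (Fin N) ℝ :=
  Matrix.of fun i j => ∫ ω, X ω i j ∂μ

/-- Generic descending product of a sequence of matrices. -/
def prodFun {N : ℕ} (f : ℕ → Matrix (Fin N) (Fin N) ℝ) : ℕ → Matrix (Fin N) (Fin N) ℝ
  | 0 => 1
  | k + 1 => f k * prodFun f k

section prodlem
variable {N : ℕ} {Ω : Type*}

lemma prodDesc_eq_prodFun (S : ℕ → Ω → Matrix (Fin N) (Fin N) ℝ) (a : ℕ) (ω : Ω) :
    ∀ k, prodDesc S a ω k = prodFun (fun t => S (a + t) ω) k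
  | 0 => rfl
  | k + 1 => by rw [prodDesc, prodFun, prodDesc_eq_prodFun S a ω k]

lemma prodFun_congr {f g : ℕ → Matrix (Fin N) (Fin N) ℝ} :
    ∀ k, (∀ t < k, f t = g t) → prodFun f k = prodFun g k
  | 0, _ => rfl
  | k + 1, h => by
      rw [prodFun, prodFun, h k (Nat.lt_succ_self k),
        prodFun_congr k (fun t ht => h t (ht.trans (Nat.lt_succ_self k)))]

lemma prodDesc_succ_right (S : ℕ → Ω → Matrix (Fin N) (Fin N) ℝ) (a : ℕ) (ω : Ω) :
    ∀ k, prodDesc S a ω (k + 1) = prodDesc S (a + 1) ω k * S a ω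
  | 0 => by simp [prodDesc]
  | k + 1 => by
      have h1 : prodDesc S a ω (k + 2) = S (a + (k + 1)) ω * prodDesc S a ω (k + 1) := rfl
      rw [h1, prodDesc_succ_right S a ω k]
      have h2 : prodDesc S (a + 1) ω (k + 1) = S (a + 1 + k) ω * prodDesc S (a + 1) ω k := rfl
      rw [h2, mul_assoc]
      rw [show a + (k + 1) = a + 1 + k from by omega]

lemma measurable_prodDesc [MeasurableSpace Ω] {S : ℕ → Ω → Matrix (Fin N) (Fin N) ℝ}
    (hS : ∀ τ, Measurable (S τ)) (a : ℕ) :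
    ∀ k, Measurable fun ω => prodDesc S a ω k
  | 0 => measurable_const
  | k + 1 => measurable_matmul (hS (a + k)) (measurable_prodDesc hS a k)

lemma measurable_transpose [MeasurableSpace Ω] {f : Ω → Matrix (Fin N) (Fin N) ℝ}
    (hf : Measurable f) : Measurable fun ω => (f ω)ᵀ :=
  measurable_matrix_of fun i j => measurable_entry hf j i

lemma specNormR_prodDesc_le [MeasurableSpace Ω] {μ : Measure Ω}
    {S : ℕ → Ω → Matrix (Fin N) (Fin N) ℝ} {ρ : ℝ} (hρ : 0 < ρ)
    (hSbound : ∀ τ, ∀ᵐ ω ∂μ, specNormR (S τ ω) ≤ ρ) (a : ℕ) :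
    ∀ k, ∀ᵐ ω ∂μ, specNormR (prodDesc S a ω k) ≤ ρ ^ k := by
  intro k
  induction k with
  | zero =>
      filter_upwards with ω
      simpa [prodDesc] using specNormR_one_le (N := N)
  | succ k ih =>
      filter_upwards [ih, hSbound (a + k)] with ω h1 h2
      calc specNormR (prodDesc S a ω (k + 1))
          ≤ specNormR (S (a + k) ω) * specNormR (prodDesc S a ω k) := specNormR_mul_le _ _
        _ ≤ ρ * ρ ^ k := by
            apply mul_le_mul h2 h1 (specNormR_nonneg _) hρ.le
        _ = ρ ^ (k + 1) := (pow_succ' ρ k).symm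

end prodlem

section indep
variable {N : ℕ} {Ω : Type*} [MeasurableSpace Ω] {μ : Measure Ω}

lemma measurable_prodFun {α : Type*} [MeasurableSpace α]
    {f : ℕ → α → Matrix (Fin N) (Fin N) ℝ} (hf : ∀ t, Measurable (f t)) :
    ∀ k, Measurable fun x => prodFun (fun t => f t x) k
  | 0 => measurable_const
  | k + 1 => measurable_matmul (hf k) (measurable_prodFun hf k)

lemma indep_head_prod {S : ℕ → Ω → Matrix (Fin N) (Fin N) ℝ}
    (hSmeas : ∀ τ, Measurable (S τ))
    (hSindep : iIndepFun S μ) (a k : ℕ) :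
    IndepFun (S a) (fun ω => prodDesc S (a + 1) ω k) μ := by
  classical
  have hdisj : Disjoint ({a} : Finset ℕ) (Finset.Icc (a + 1) (a + k)) := by
    simp only [Finset.disjoint_left, Finset.mem_singleton, Finset.mem_Icc]
    rintro x rfl; omega
  have hbase := hSindep.indepFun_finset {a} (Finset.Icc (a + 1) (a + k)) hdisj hSmeas
  have hφ₁ : Measurable fun X : ({x // x ∈ ({a} : Finset ℕ)} → Matrix (Fin N) (Fin N) ℝ) =>
      X ⟨a, Finset.mem_singleton_self a⟩ := measurable_pi_apply _
  have hφ₂ : Measurable fun X : ({x // x ∈ Finset.Icc (a + 1) (a + k)} →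
      Matrix (Fin N) (Fin N) ℝ) => prodFun (fun t =>
        if h : a + 1 + t ∈ Finset.Icc (a + 1) (a + k) then X ⟨a + 1 + t, h⟩ else 1) k := by
    apply measurable_prodFun
    intro t
    split
    · exact measurable_pi_apply _
    · exact measurable_const
  have := hbase.comp hφ₁ hφ₂
  have heq1 : (fun X : ({x // x ∈ ({a} : Finset ℕ)} → Matrix (Fin N) (Fin N) ℝ) =>
      X ⟨a, Finset.mem_singleton_self a⟩) ∘ (fun ω (i : {x // x ∈ ({a} : Finset ℕ)}) =>
      S i ω) = S a := rfl
  have heq2 : (fun X : ({x // x ∈ Finset.Icc (a + 1) (a + k)} →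
      Matrix (Fin N) (Fin N) ℝ) => prodFun (fun t =>
        if h : a + 1 + t ∈ Finset.Icc (a + 1) (a + k) then X ⟨a + 1 + t, h⟩ else 1) k) ∘
      (fun ω (i : {x // x ∈ Finset.Icc (a + 1) (a + k)}) => S i ω) =
      fun ω => prodDesc S (a + 1) ω k := by
    funext ω
    show prodFun _ k = prodDesc S (a + 1) ω k
    rw [prodDesc_eq_prodFun]
    apply prodFun_congr
    intro t ht
    have hm : a + 1 + t ∈ Finset.Icc (a + 1) (a + k) := by
      simp only [Finset.mem_Icc]; omega
    rw [dif_pos hm]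
  rwa [heq1, heq2] at this

end indep

section main
variable {N : ℕ} {Ω : Type*} [MeasurableSpace Ω] {μ : Measure Ω}
  {S : ℕ → Ω → Matrix (Fin N) (Fin N) ℝ} {ρ : ℝ}

lemma gram_entry_bound {A : Matrix (Fin N) (Fin N) ℝ} {r : ℝ}
    (h : specNormR A ≤ r) (k l : Fin N) : |(Aᵀ * A) k l| ≤ N * (r * r) := by
  have hb : ∀ m i, |A m i| ≤ r := fun m i => (abs_entry_le_specNormR A m i).trans h
  calc |(Aᵀ * A) k l| = |∑ m, A m k * A m l| := by
        simp [Matrix.mul_apply, Matrix.transpose_apply]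
    _ ≤ ∑ m, |A m k * A m l| := Finset.abs_sum_le_sum_abs _ _
    _ ≤ ∑ _m : Fin N, r * r := Finset.sum_le_sum fun m _ => by
        rw [abs_mul]
        exact mul_le_mul (hb m k) (hb m l) (abs_nonneg _) ((abs_nonneg (A m k)).trans (hb m k))
    _ = N * (r * r) := by simp [Finset.sum_const, Finset.card_univ, nsmul_eq_mul]

lemma ae_gram_bound (hρ : 0 < ρ) (hSbound : ∀ t, ∀ᵐ ω ∂μ, specNormR (S t ω) ≤ ρ)
    (a τ : ℕ) : ∀ᵐ ω ∂μ, ∀ k l,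
      |((prodDesc S a ω τ)ᵀ * prodDesc S a ω τ) k l| ≤ N * (ρ ^ τ * ρ ^ τ) := by
  filter_upwards [specNormR_prodDesc_le hρ hSbound a τ] with ω h k l
  exact gram_entry_bound h k l

lemma integrable_bounded [IsProbabilityMeasure μ] {h : Ω → ℝ} (hm : Measurable h)
    {C : ℝ} (hb : ∀ᵐ ω ∂μ, |h ω| ≤ C) : Integrable h μ :=
  (integrable_const C).mono' hm.aestronglyMeasurable
    (by filter_upwards [hb] with ω hω; simpa [Real.norm_eq_abs] using hω)

lemma entry_ae_bound (hSbound : ∀ t, ∀ᵐ ω ∂μ, specNormR (S t ω) ≤ ρ) (a : ℕ)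
    (k i : Fin N) : ∀ᵐ ω ∂μ, |S a ω k i| ≤ ρ := by
  filter_upwards [hSbound a] with ω h
  exact (abs_entry_le_specNormR _ _ _).trans h

lemma meas_u (k i l j : Fin N) :
    Measurable fun X : Matrix (Fin N) (Fin N) ℝ => X k i * X l j :=
  (measurable_entry measurable_id k i).mul (measurable_entry measurable_id l j)

lemma cMat_shift (hSident : ∀ t, IdentDistrib (S t) (S 0) μ μ) (a : ℕ) (k l i j : Fin N) :
    ∫ ω, S a ω k i * S a ω l j ∂μ = ∫ ω, S 0 ω k i * S 0 ω l j ∂μ :=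
  ((hSident a).comp (meas_u k i l j)).integral_eq

lemma conj_entry (s W : Matrix (Fin N) (Fin N) ℝ) (i j : Fin N) :
    (sᵀ * W * s) i j = ∑ l, ∑ k, W k l * (s k i * s l j) := by
  simp only [Matrix.mul_apply, Matrix.transpose_apply, Finset.sum_mul]
  exact Finset.sum_congr rfl fun l _ => Finset.sum_congr rfl fun k _ => by ring

/-- The (deterministic) Lyapunov operator associated with the distribution of `S 0`. -/
noncomputable def lyapF (μ : Measure Ω) (S : ℕ → Ω → Matrix (Fin N) (Fin N) ℝ)
    (W : Matrix (Fin N) (Fin N) ℝ) : Matrix (Fin N) (Fin N) ℝ :=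
  Matrix.of fun i j => ∑ l, ∑ k, W k l * ∫ ω, S 0 ω k i * S 0 ω l j ∂μ

lemma EM_gram_succ [IsProbabilityMeasure μ] (hρ : 0 < ρ)
    (hSmeas : ∀ t, Measurable (S t))
    (hSindep : iIndepFun S μ)
    (hSident : ∀ t, IdentDistrib (S t) (S 0) μ μ)
    (hSbound : ∀ t, ∀ᵐ ω ∂μ, specNormR (S t ω) ≤ ρ) (a τ : ℕ) :
    EM μ (fun ω => (prodDesc S a ω (τ + 1))ᵀ * prodDesc S a ω (τ + 1)) =
      lyapF μ S (EM μ (fun ω => (prodDesc S (a + 1) ω τ)ᵀ * prodDesc S (a + 1) ω τ)) := by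
  have hPmeas : Measurable fun ω => prodDesc S (a + 1) ω τ := measurable_prodDesc hSmeas _ τ
  have hMmeas : Measurable fun ω => (prodDesc S (a + 1) ω τ)ᵀ * prodDesc S (a + 1) ω τ :=
    measurable_matmul (measurable_transpose hPmeas) hPmeas
  ext i j
  show (∫ ω, ((prodDesc S a ω (τ + 1))ᵀ * prodDesc S a ω (τ + 1)) i j ∂μ) = _
  have hint : ∀ ω, ((prodDesc S a ω (τ + 1))ᵀ * prodDesc S a ω (τ + 1)) i j
      = ∑ l, ∑ k, ((prodDesc S (a + 1) ω τ)ᵀ * prodDesc S (a + 1) ω τ) k l *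
          (S a ω k i * S a ω l j) := by
    intro ω
    rw [prodDesc_succ_right, Matrix.transpose_mul, Matrix.mul_assoc,
      ← Matrix.mul_assoc (prodDesc S (a + 1) ω τ)ᵀ, ← Matrix.mul_assoc]
    exact conj_entry _ _ i j
  have hInt : ∀ k l : Fin N, Integrable (fun ω =>
      ((prodDesc S (a + 1) ω τ)ᵀ * prodDesc S (a + 1) ω τ) k l *
        (S a ω k i * S a ω l j)) μ := by
    intro k l
    apply integrable_bounded
      ((measurable_entry hMmeas k l).mul
        ((measurable_entry (hSmeas a) k i).mul (measurable_entry (hSmeas a) l j)))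
      (C := (N * (ρ ^ τ * ρ ^ τ)) * (ρ * ρ))
    filter_upwards [ae_gram_bound hρ hSbound (a + 1) τ, entry_ae_bound hSbound a k i,
      entry_ae_bound hSbound a l j] with ω h1 h2 h3
    simp only [Pi.mul_apply]; rw [abs_mul, abs_mul]
    have hρτ : (0:ℝ) ≤ N * (ρ ^ τ * ρ ^ τ) := by positivity
    exact mul_le_mul (h1 k l)
      (mul_le_mul h2 h3 (abs_nonneg _) hρ.le)
      (mul_nonneg (abs_nonneg _) (abs_nonneg _)) hρτ
  simp only [hint]
  rw [integral_finset_sum _ (fun l _ => integrable_finset_sum _ fun k _ => hInt k l)]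
  simp only [lyapF, Matrix.of_apply]
  refine Finset.sum_congr rfl fun l _ => ?_
  rw [integral_finset_sum _ fun k _ => hInt k l]
  refine Finset.sum_congr rfl fun k _ => ?_
  have hindep : IndepFun
      (fun ω => ((prodDesc S (a + 1) ω τ)ᵀ * prodDesc S (a + 1) ω τ) k l)
      (fun ω => S a ω k i * S a ω l j) μ := by
    have hu : Measurable fun X : Matrix (Fin N) (Fin N) ℝ => (Xᵀ * X) k l :=
      measurable_entry (measurable_matmul (measurable_transpose measurable_id)
        measurable_id) k l
    exact ((indep_head_prod hSmeas hSindep a τ).symm.comp hu (meas_u k i l j))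
  have hmul := hindep.integral_mul_eq_mul_integral
    (measurable_entry hMmeas k l).aestronglyMeasurable
    ((measurable_entry (hSmeas a) k i).mul (measurable_entry (hSmeas a) l j)).aestronglyMeasurable
  have : (∫ ω, ((prodDesc S (a + 1) ω τ)ᵀ * prodDesc S (a + 1) ω τ) k l *
      (S a ω k i * S a ω l j) ∂μ)
      = (∫ ω, ((prodDesc S (a + 1) ω τ)ᵀ * prodDesc S (a + 1) ω τ) k l ∂μ) *
        ∫ ω, S a ω k i * S a ω l j ∂μ := hmul
  rw [this, cMat_shift hSident a k l i j]
  rfl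

lemma EM_gram [IsProbabilityMeasure μ] (hρ : 0 < ρ)
    (hSmeas : ∀ t, Measurable (S t))
    (hSindep : iIndepFun S μ)
    (hSident : ∀ t, IdentDistrib (S t) (S 0) μ μ)
    (hSbound : ∀ t, ∀ᵐ ω ∂μ, specNormR (S t ω) ≤ ρ) :
    ∀ τ a, EM μ (fun ω => (prodDesc S a ω τ)ᵀ * prodDesc S a ω τ) = (lyapF μ S)^[τ] 1
  | 0, a => by
      ext i j
      show (∫ ω, ((prodDesc S a ω 0)ᵀ * prodDesc S a ω 0) i j ∂μ) = _
      have h1 : (fun ω => ((prodDesc S a ω 0)ᵀ * prodDesc S a ω 0) i j)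
          = fun _ => (1 : Matrix (Fin N) (Fin N) ℝ) i j := by
        funext ω
        rw [show prodDesc S a ω 0 = 1 from rfl, Matrix.transpose_one, one_mul]
      rw [h1, integral_const]
      simp
  | τ + 1, a => by
      rw [EM_gram_succ hρ hSmeas hSindep hSident hSbound a τ,
        EM_gram hρ hSmeas hSindep hSident hSbound τ (a + 1),
        Function.iterate_succ_apply']

lemma EM_conj_const [IsProbabilityMeasure μ] (hρ : 0 < ρ)
    (hSmeas : ∀ t, Measurable (S t))
    (hSbound : ∀ t, ∀ᵐ ω ∂μ, specNormR (S t ω) ≤ ρ)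
    (W : Matrix (Fin N) (Fin N) ℝ) :
    EM μ (fun ω => (S 0 ω)ᵀ * W * S 0 ω) = lyapF μ S W := by
  ext i j
  show (∫ ω, ((S 0 ω)ᵀ * W * S 0 ω) i j ∂μ) = _
  have hint : ∀ ω, ((S 0 ω)ᵀ * W * S 0 ω) i j
      = ∑ l, ∑ k, W k l * (S 0 ω k i * S 0 ω l j) := fun ω => conj_entry _ _ i j
  have hInt : ∀ k l : Fin N, Integrable (fun ω => W k l * (S 0 ω k i * S 0 ω l j)) μ := by
    intro k l
    refine Integrable.const_mul ?_ _
    apply integrable_bounded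
      ((measurable_entry (hSmeas 0) k i).mul (measurable_entry (hSmeas 0) l j)) (C := ρ * ρ)
    filter_upwards [entry_ae_bound hSbound 0 k i, entry_ae_bound hSbound 0 l j] with ω h2 h3
    simp only [Pi.mul_apply]; rw [abs_mul]
    exact mul_le_mul h2 h3 (abs_nonneg _) hρ.le
  simp only [hint]
  rw [integral_finset_sum _ (fun l _ => integrable_finset_sum _ fun k _ => hInt k l)]
  simp only [lyapF, Matrix.of_apply]
  refine Finset.sum_congr rfl fun l _ => ?_
  rw [integral_finset_sum _ fun k _ => hInt k l]
  exact Finset.sum_congr rfl fun k _ => integral_const_mul _ _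

end main

/-- **Lemma 1** (convergence of noise gain over random graphs).  For i.i.d.
random shift operators `(S_t)` with `‖S_t‖₂ ≤ ρ⋆` a.s. and `|ψ| ρ⋆ < 1`, the
series `W_Φ = Σ_τ |ψ|^{2τ} E[Φ_{0:τ−1}ᵀ Φ_{0:τ−1}]` converges and satisfies
the stochastic Lyapunov equation `W_Φ = |ψ|² E[S_0ᵀ W_Φ S_0] + I`. -/
theorem stmt_11 {N : ℕ} (hN : 1 ≤ N) (ρ : ℝ) (hρ : 0 < ρ)
    {Ω : Type*} [MeasurableSpace Ω] (μ : Measure Ω) [IsProbabilityMeasure μ]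
    (S : ℕ → Ω → Matrix (Fin N) (Fin N) ℝ)
    (hSmeas : ∀ τ, Measurable (S τ))
    (hSindep : iIndepFun S μ)
    (hSident : ∀ τ, IdentDistrib (S τ) (S 0) μ μ)
    (hSbound : ∀ τ, ∀ᵐ ω ∂μ, specNormR (S τ ω) ≤ ρ)
    (ψ : ℂ) (hψ : ‖ψ‖ * ρ < 1)
    (WΦ : Matrix (Fin N) (Fin N) ℝ)
    (hWΦ : WΦ = ∑' τ : ℕ,
        ‖ψ‖ ^ (2 * τ) • EM μ (fun ω => (prodDesc S 0 ω τ)ᵀ * prodDesc S 0 ω τ)) :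
    Summable (fun τ : ℕ =>
        ‖ψ‖ ^ (2 * τ) • EM μ (fun ω => (prodDesc S 0 ω τ)ᵀ * prodDesc S 0 ω τ)) ∧
    WΦ = ‖ψ‖ ^ 2 • EM μ (fun ω => (S 0 ω)ᵀ * WΦ * S 0 ω) + 1 := by
  classical
  set c : ℝ := ‖ψ‖ with hcdef
  have hc0 : 0 ≤ c := norm_nonneg ψ
  have hcρ : 0 ≤ c * ρ := mul_nonneg hc0 hρ.le
  have hr1 : (c * ρ) ^ 2 < 1 := pow_lt_one₀ hcρ hψ two_ne_zero
  set g : ℕ → Matrix (Fin N) (Fin N) ℝ := fun τ =>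
      c ^ (2 * τ) • EM μ (fun ω => (prodDesc S 0 ω τ)ᵀ * prodDesc S 0 ω τ) with hg
  have hgram := EM_gram hρ hSmeas hSindep hSident hSbound
  -- entrywise bound on `g`
  have hgb : ∀ τ (i j : Fin N), |g τ i j| ≤ N * ((c * ρ) ^ 2) ^ τ := by
    intro τ i j
    have hEM : |EM μ (fun ω => (prodDesc S 0 ω τ)ᵀ * prodDesc S 0 ω τ) i j|
        ≤ N * (ρ ^ τ * ρ ^ τ) := by
      have hb : ∀ᵐ ω ∂μ, ‖((prodDesc S 0 ω τ)ᵀ * prodDesc S 0 ω τ) i j‖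
          ≤ N * (ρ ^ τ * ρ ^ τ) := by
        filter_upwards [ae_gram_bound hρ hSbound 0 τ] with ω h
        simpa [Real.norm_eq_abs] using h i j
      have := norm_integral_le_of_norm_le_const (μ := μ) hb
      simpa [Real.norm_eq_abs, measure_univ, EM] using this
    have hgij : g τ i j = c ^ (2 * τ) *
        EM μ (fun ω => (prodDesc S 0 ω τ)ᵀ * prodDesc S 0 ω τ) i j := rfl
    rw [hgij, abs_mul, abs_pow, abs_of_nonneg hc0]
    calc c ^ (2 * τ) * |EM μ (fun ω => (prodDesc S 0 ω τ)ᵀ * prodDesc S 0 ω τ) i j|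
        ≤ c ^ (2 * τ) * (N * (ρ ^ τ * ρ ^ τ)) := by
          exact mul_le_mul_of_nonneg_left hEM (by positivity)
      _ = N * ((c * ρ) ^ 2) ^ τ := by
          rw [← pow_mul, mul_pow, two_mul τ, pow_add]
          ring
  have hsum_entry : ∀ i j : Fin N, Summable fun τ => g τ i j := by
    intro i j
    apply Summable.of_norm
    apply Summable.of_nonneg_of_le (fun τ => norm_nonneg _)
      (fun τ => by simpa [Real.norm_eq_abs] using hgb τ i j)
    exact (summable_geometric_of_lt_one (by positivity) hr1).mul_left _
  have hsum : Summable g := Pi.summable.mpr fun i => Pi.summable.mpr fun j => hsum_entry i j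
  refine ⟨hsum, ?_⟩
  rw [EM_conj_const hρ hSmeas hSbound WΦ]
  -- abbreviations
  have hA : ∀ τ, EM μ (fun ω => (prodDesc S 0 ω τ)ᵀ * prodDesc S 0 ω τ)
      = (lyapF μ S)^[τ] 1 := fun τ => hgram τ 0
  have hWentry : ∀ k l : Fin N, WΦ k l = ∑' τ, g τ k l := by
    intro k l
    rw [hWΦ]
    show (∑' τ, g τ) k l = _
    exact (congrFun (tsum_apply (x := k) hsum) l).trans (tsum_apply (Pi.summable.mp hsum k))
  ext i j
  have hlhs : WΦ i j = g 0 i j + ∑' τ, g (τ + 1) i j := by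
    rw [hWentry i j, Summable.tsum_eq_zero_add (hsum_entry i j)]
  have hg0 : g 0 i j = (1 : Matrix (Fin N) (Fin N) ℝ) i j := by
    have : g 0 = (1 : ℝ) • (lyapF μ S)^[0] 1 := by rw [hg]; simp [hA 0]
    rw [this]; simp
  -- RHS entry
  have hAsucc : ∀ τ, ((lyapF μ S)^[τ + 1] 1) i j
      = ∑ l, ∑ k, ((lyapF μ S)^[τ] 1) k l * ∫ ω, S 0 ω k i * S 0 ω l j ∂μ := by
    intro τ; rw [Function.iterate_succ_apply']; rfl
  have hrhs : (c ^ 2 • lyapF μ S WΦ + 1) i j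
      = (1 : Matrix (Fin N) (Fin N) ℝ) i j + ∑' τ, g (τ + 1) i j := by
    have h1 : (c ^ 2 • lyapF μ S WΦ + 1) i j
        = c ^ 2 * (∑ l, ∑ k, WΦ k l * ∫ ω, S 0 ω k i * S 0 ω l j ∂μ)
          + (1 : Matrix (Fin N) (Fin N) ℝ) i j := rfl
    rw [h1]
    have h2 : ∀ l k : Fin N, WΦ k l * (∫ ω, S 0 ω k i * S 0 ω l j ∂μ)
        = ∑' τ, g τ k l * ∫ ω, S 0 ω k i * S 0 ω l j ∂μ := by
      intro l k
      rw [hWentry k l, tsum_mul_right]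
    have h3 : (∑ l, ∑ k, WΦ k l * ∫ ω, S 0 ω k i * S 0 ω l j ∂μ)
        = ∑' τ, ∑ l, ∑ k, g τ k l * ∫ ω, S 0 ω k i * S 0 ω l j ∂μ := by
      simp only [h2]
      have hin : ∀ l : Fin N, (∑ k, ∑' τ, g τ k l * ∫ ω, S 0 ω k i * S 0 ω l j ∂μ)
          = ∑' τ, ∑ k, g τ k l * ∫ ω, S 0 ω k i * S 0 ω l j ∂μ := fun l =>
        (Summable.tsum_finsetSum (fun k _ => (hsum_entry k l).mul_right _)).symm
      simp only [hin]
      exact (Summable.tsum_finsetSum (fun l _ => summable_sum fun k _ => (hsum_entry k l).mul_right _)).symm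
    have h4 : ∀ τ, (∑ l, ∑ k, g τ k l * ∫ ω, S 0 ω k i * S 0 ω l j ∂μ)
        = c ^ (2 * τ) * ((lyapF μ S)^[τ + 1] 1) i j := by
      intro τ
      rw [hAsucc τ, Finset.mul_sum]
      refine Finset.sum_congr rfl fun l _ => ?_
      rw [Finset.mul_sum]
      refine Finset.sum_congr rfl fun k _ => ?_
      have : g τ k l = c ^ (2 * τ) * ((lyapF μ S)^[τ] 1) k l := by
        rw [hg]; simp [hA τ, Matrix.smul_apply, smul_eq_mul]
      rw [this]; ring
    have h5 : ∀ τ, g (τ + 1) i j = c ^ 2 * (c ^ (2 * τ) * ((lyapF μ S)^[τ + 1] 1) i j) := by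
      intro τ
      have : g (τ + 1) i j = c ^ (2 * (τ + 1)) * ((lyapF μ S)^[τ + 1] 1) i j := by
        rw [hg]; simp [hA (τ + 1), Matrix.smul_apply, smul_eq_mul]
      rw [this, ← mul_assoc, ← pow_add]
      ring_nf
    rw [h3]
    simp only [h4]
    rw [← tsum_mul_left]
    simp only [← h5]
    ring
  rw [hlhs]
  show _ = (c ^ 2 • lyapF μ S WΦ + 1) i j
  rw [hrhs, hg0, add_comm]
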